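/- arXiv:1504.03655 — 3 statements merged into one kernel-verified Lean document; each statement's English description precedes it below -/
import Mathlib

section
/- Spectral decomposition eigengap bound: let A = VΛ_kVᵀ + V⊥Λ⊥V⊥ᵀ where [V, V⊥] is orthogonal, Λ_k has diagonal entries all ≥ λ_k, and Λ⊥ has diagonal entries all ≤ λ_{k+1}. For any unit vector u, writing c = ‖Vᵀu‖ and s = ‖V⊥ᵀu‖ (so c² + s² = 1), we have uᵀ(s²VVᵀ − c²V⊥V⊥ᵀ)Au ≥ s²c²(λ_k − λ_{k+1}). -/
open Matrix

/-- Spectral decomposition eigengap bound: with `A = VΛ_kVᵀ + V⊥Λ⊥V⊥ᵀ`, `[V, V⊥]` orthogonal,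
`diag(Λ_k) ≥ λ_k`, `diag(Λ⊥) ≤ λ_{k+1}`, and `u` a unit vector with `c = ‖Vᵀu‖`,
`s = ‖V⊥ᵀu‖`, we have `uᵀ(s²VVᵀ − c²V⊥V⊥ᵀ)Au ≥ s²c²(λ_k − λ_{k+1})`. -/
theorem eigengap_bound {n k m : ℕ}
    (V : Matrix (Fin n) (Fin k) ℝ) (Vp : Matrix (Fin n) (Fin m) ℝ)
    (d1 : Fin k → ℝ) (d2 : Fin m → ℝ) (lk lk1 : ℝ)
    (A : Matrix (Fin n) (Fin n) ℝ)
    (hV : Vᵀ * V = 1) (hVp : Vpᵀ * Vp = 1) (hVVp : Vᵀ * Vp = 0)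
    (hcomplete : V * Vᵀ + Vp * Vpᵀ = 1)
    (hA : A = V * Matrix.diagonal d1 * Vᵀ + Vp * Matrix.diagonal d2 * Vpᵀ)
    (hd1 : ∀ i, lk ≤ d1 i) (hd2 : ∀ i, d2 i ≤ lk1)
    (u : Fin n → ℝ) (hu : ∑ i, (u i) ^ 2 = 1)
    (c2 s2 : ℝ)
    (hc2 : c2 = ∑ i, (Vᵀ.mulVec u i) ^ 2)
    (hs2 : s2 = ∑ i, (Vpᵀ.mulVec u i) ^ 2) :
    s2 * c2 * (lk - lk1) ≤
      u ⬝ᵥ ((s2 • (V * Vᵀ) - c2 • (Vp * Vpᵀ)) * A).mulVec u := by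
  have hVpV : Vpᵀ * V = 0 := by
    have := congrArg Matrix.transpose hVVp
    simpa [Matrix.transpose_mul] using this
  have e1 : ∀ (X : Matrix (Fin k) (Fin n) ℝ), Vᵀ * (V * X) = X := fun X => by
    rw [← Matrix.mul_assoc, hV, Matrix.one_mul]
  have e2 : ∀ (X : Matrix (Fin m) (Fin n) ℝ), Vpᵀ * (Vp * X) = X := fun X => by
    rw [← Matrix.mul_assoc, hVp, Matrix.one_mul]
  have e3 : ∀ (X : Matrix (Fin m) (Fin n) ℝ), Vᵀ * (Vp * X) = 0 := fun X => by
    rw [← Matrix.mul_assoc, hVVp, Matrix.zero_mul]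
  have e4 : ∀ (X : Matrix (Fin k) (Fin n) ℝ), Vpᵀ * (V * X) = 0 := fun X => by
    rw [← Matrix.mul_assoc, hVpV, Matrix.zero_mul]
  have key : (s2 • (V * Vᵀ) - c2 • (Vp * Vpᵀ)) * A =
      s2 • (V * (Matrix.diagonal d1 * Vᵀ)) - c2 • (Vp * (Matrix.diagonal d2 * Vpᵀ)) := by
    subst hA
    simp [Matrix.sub_mul, Matrix.smul_mul, Matrix.mul_add, Matrix.mul_assoc, e1, e2, e3, e4]
    abel
  rw [key]
  set x := Vᵀ.mulVec u with hx
  set y := Vpᵀ.mulVec u with hy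
  have dv : u ⬝ᵥ (s2 • (V * (Matrix.diagonal d1 * Vᵀ)) -
      c2 • (Vp * (Matrix.diagonal d2 * Vpᵀ))).mulVec u =
      s2 * (∑ i, d1 i * x i ^ 2) - c2 * (∑ i, d2 i * y i ^ 2) := by
    rw [Matrix.sub_mulVec, Matrix.smul_mulVec, Matrix.smul_mulVec,
      dotProduct_sub, dotProduct_smul, dotProduct_smul]
    congr 1
    · rw [← Matrix.mul_assoc, Matrix.mul_assoc, ← Matrix.mulVec_mulVec,
        Matrix.dotProduct_mulVec, ← Matrix.mulVec_transpose, ← Matrix.mulVec_mulVec, ← hx]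
      rw [smul_eq_mul]
      congr 1
      exact Finset.sum_congr rfl fun i _ => by
        rw [Matrix.mulVec_diagonal]; ring
    · rw [← Matrix.mul_assoc, Matrix.mul_assoc, ← Matrix.mulVec_mulVec,
        Matrix.dotProduct_mulVec, ← Matrix.mulVec_transpose, ← Matrix.mulVec_mulVec, ← hy]
      rw [smul_eq_mul]
      congr 1
      exact Finset.sum_congr rfl fun i _ => by
        rw [Matrix.mulVec_diagonal]; ring
  rw [dv]
  have hc2' : (0:ℝ) ≤ c2 := by rw [hc2]; positivity
  have hs2' : (0:ℝ) ≤ s2 := by rw [hs2]; positivity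
  have h1 : lk * c2 ≤ ∑ i, d1 i * x i ^ 2 := by
    rw [hc2, Finset.mul_sum]
    exact Finset.sum_le_sum fun i _ => mul_le_mul_of_nonneg_right (hd1 i) (sq_nonneg _)
  have h2 : ∑ i, d2 i * y i ^ 2 ≤ lk1 * s2 := by
    rw [hs2, Finset.mul_sum]
    exact Finset.sum_le_sum fun i _ => mul_le_mul_of_nonneg_right (hd2 i) (sq_nonneg _)
  nlinarith [mul_le_mul_of_nonneg_left h1 hs2', mul_le_mul_of_nonneg_left h2 hc2']
end

section
/- First-order equivalence of normalized and unnormalized updates: let G be an n×k matrix of full column rank, A symmetric, P P ᵀ = G(GᵀG)⁻¹Gᵀ the orthogonal projection onto col(G), and V ∈ ℝ^{n×k} arbitrary. Define M(η) = Vᵀ(G + η(I − GGᵀ)AG)[(G + η(I − GGᵀ)AG)ᵀ(G + η(I − GGᵀ)AG)]⁻¹(G + η(I − GGᵀ)AG)ᵀV. Then the first-order Taylor expansion of M(η) at η = 0 equals VᵀPPᵀV + η(VᵀPPᵀAV + VᵀAPPᵀV − 2VᵀPPᵀAPPᵀV). -/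
/-!
`M(η) = Vᵀ P(η) V`, where `P(η) = X (XᵀX)⁻¹ Xᵀ` is the projection onto the column space of
`X = X(η)`. The product rule and `(S⁻¹)' = -S⁻¹ S' S⁻¹` give
`P' = X' N Xᵀ - X N (X'ᵀX + XᵀX') N Xᵀ + X N X'ᵀ` with `N = (XᵀX)⁻¹`. At `η = 0`, with
`X' = (I - GGᵀ)AG`, the `GGᵀ` parts cancel because `(GᵀG)⁻¹Gᵀ(GGᵀ) = Gᵀ`, leaving
`PA + AP - 2PAP`.
-/

open Matrix

-- `HasDerivAt` only sees the topology; this norm makes square matrices a complete normed algebra.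
attribute [local instance] Matrix.linftyOpNormedAddCommGroup Matrix.linftyOpNormedSpace
  Matrix.linftyOpNormedRing Matrix.linftyOpNormedAlgebra

section Calculus

variable {𝕜 : Type*} [NontriviallyNormedField 𝕜] [CompleteSpace 𝕜]
  {l m n : Type*} [Fintype l] [Fintype m] [Fintype n] {x : 𝕜}

theorem HasDerivAt.matrix_apply {f : 𝕜 → Matrix m n 𝕜} {f' : Matrix m n 𝕜}
    (hf : HasDerivAt f f' x) (i : m) (j : n) : HasDerivAt (fun t => f t i j) (f' i j) x :=
  (entryLinearMap 𝕜 𝕜 i j).toContinuousLinearMap.hasFDerivAt.comp_hasDerivAt x hf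

theorem HasDerivAt.matrix_transpose {f : 𝕜 → Matrix m n 𝕜} {f' : Matrix m n 𝕜}
    (hf : HasDerivAt f f' x) : HasDerivAt (fun t => (f t)ᵀ) f'ᵀ x :=
  (transposeLinearEquiv m n 𝕜 𝕜).toLinearMap.toContinuousLinearMap.hasFDerivAt.comp_hasDerivAt x hf

theorem HasDerivAt.matrix_mul {f : 𝕜 → Matrix l m 𝕜} {g : 𝕜 → Matrix m n 𝕜}
    {f' : Matrix l m 𝕜} {g' : Matrix m n 𝕜} (hf : HasDerivAt f f' x) (hg : HasDerivAt g g' x) :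
    HasDerivAt (fun t => f t * g t) (f' * g x + f x * g') x := by
  rw [add_comm]
  exact (mulLinearMap 𝕜).toContinuousBilinearMap.hasDerivAt_of_bilinear (fun _ => hf) (fun _ => hg)

end Calculus

theorem HasDerivAt.matrix_inv {𝕜 : Type*} [RCLike 𝕜] {m : Type*} [Fintype m] [DecidableEq m]
    {f : 𝕜 → Matrix m m 𝕜} {f' : Matrix m m 𝕜} {x : 𝕜}
    (hf : HasDerivAt f f' x) (hx : IsUnit (f x)) :
    HasDerivAt (fun t => (f t)⁻¹) (-((f x)⁻¹ * f' * (f x)⁻¹)) x := by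
  obtain ⟨u, hu⟩ := hx
  have hinv := hasFDerivAt_ringInverse (𝕜 := 𝕜) u
  rw [hu] at hinv
  have := hinv.comp_hasDerivAt x hf
  simp only [Function.comp_def, ← nonsing_inv_eq_ringInverse, coe_units_inv, hu] at this
  exact this

namespace Matrix

variable {𝕜 : Type*} {n k : Type*} [Fintype n] [Fintype k] [DecidableEq k]

section Algebra

variable [CommRing 𝕜]

noncomputable def colProj (X : Matrix n k 𝕜) : Matrix n n 𝕜 := X * (Xᵀ * X)⁻¹ * Xᵀ

noncomputable def colProjDeriv (X X' : Matrix n k 𝕜) : Matrix n n 𝕜 :=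
  X' * (Xᵀ * X)⁻¹ * Xᵀ - X * (Xᵀ * X)⁻¹ * (X'ᵀ * X + Xᵀ * X') * (Xᵀ * X)⁻¹ * Xᵀ
    + X * (Xᵀ * X)⁻¹ * X'ᵀ

theorem colProjDeriv_oja [DecidableEq n] (G : Matrix n k 𝕜) (A : Matrix n n 𝕜)
    (hG : IsUnit (Gᵀ * G)) (hA : A.IsSymm) :
    colProjDeriv G ((1 - G * Gᵀ) * (A * G))
      = colProj G * A + A * colProj G - (2 : 𝕜) • (colProj G * A * colProj G) := by
  have hdet := (isUnit_iff_isUnit_det _).mp hG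
  have hNS : (Gᵀ * G)⁻¹ * (Gᵀ * G) = 1 := nonsing_inv_mul _ hdet
  have hSN : Gᵀ * (G * (Gᵀ * G)⁻¹) = 1 := by rw [← Matrix.mul_assoc]; exact mul_nonsing_inv _ hdet
  have cancel_left (Y : Matrix k n 𝕜) : (Gᵀ * G)⁻¹ * (Gᵀ * (G * Y)) = Y := by
    rw [← Matrix.mul_assoc Gᵀ, ← Matrix.mul_assoc, hNS, Matrix.one_mul]
  have hBt : ((1 - G * Gᵀ) * (A * G))ᵀ = Gᵀ * A * (1 - G * Gᵀ) := by
    rw [transpose_mul, transpose_mul, hA.eq, transpose_sub, transpose_one, transpose_mul,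
      transpose_transpose, Matrix.mul_assoc]
  rw [colProjDeriv, hBt]
  simp only [colProj, two_smul, Matrix.mul_sub, Matrix.sub_mul, Matrix.mul_add, Matrix.add_mul,
    Matrix.mul_one, Matrix.one_mul, Matrix.mul_assoc, cancel_left, hSN]
  abel

end Algebra

theorem hasDerivAt_colProj [RCLike 𝕜] {X : 𝕜 → Matrix n k 𝕜} {X' : Matrix n k 𝕜} {x : 𝕜}
    (hX : HasDerivAt X X' x) (hx : IsUnit ((X x)ᵀ * X x)) :
    HasDerivAt (fun t => colProj (X t)) (colProjDeriv (X x) X') x := by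
  have hXt := hX.matrix_transpose
  refine ((hX.matrix_mul ((hXt.matrix_mul hX).matrix_inv hx)).matrix_mul hXt).congr_deriv ?_
  simp only [colProjDeriv, Matrix.add_mul, Matrix.mul_neg, Matrix.neg_mul, Matrix.mul_assoc]
  abel

end Matrix

/-- First-order expansion of the potential for the unnormalized (Oja-style) update:
with `P Pᵀ = G(GᵀG)⁻¹Gᵀ` and
`M(η) = Vᵀ X(η) (X(η)ᵀX(η))⁻¹ X(η)ᵀ V` for `X(η) = G + η(I − GGᵀ)AG`, we have
`M(0) = VᵀPPᵀV` and `M'(0) = VᵀPPᵀAV + VᵀAPPᵀV − 2VᵀPPᵀAPPᵀV` (entrywise). -/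
theorem unnormalized_update_first_order {n k : ℕ}
    (G : Matrix (Fin n) (Fin k) ℝ) (A : Matrix (Fin n) (Fin n) ℝ)
    (V : Matrix (Fin n) (Fin k) ℝ)
    (hG : IsUnit (Gᵀ * G)) (hA : A.IsSymm)
    (PP : Matrix (Fin n) (Fin n) ℝ) (hPP : PP = G * (Gᵀ * G)⁻¹ * Gᵀ)
    (X : ℝ → Matrix (Fin n) (Fin k) ℝ)
    (hX : ∀ η, X η = G + η • ((1 - G * Gᵀ) * (A * G)))
    (M : ℝ → Matrix (Fin k) (Fin k) ℝ)
    (hM : ∀ η, M η = Vᵀ * X η * ((X η)ᵀ * X η)⁻¹ * (X η)ᵀ * V) :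
    M 0 = Vᵀ * PP * V ∧
      ∀ i j, HasDerivAt (fun η => M η i j)
        ((Vᵀ * PP * A * V + Vᵀ * A * PP * V
          - (2 : ℝ) • (Vᵀ * PP * A * PP * V)) i j) 0 := by
  have hPP' : PP = colProj G := hPP
  have hMP (η : ℝ) : M η = Vᵀ * colProj (X η) * V := by
    simp only [hM, colProj, Matrix.mul_assoc]
  have hX0 : X 0 = G := by simp [hX]
  refine ⟨by rw [hMP, hX0, hPP'], fun i j => ?_⟩
  have hXd : HasDerivAt X ((1 - G * Gᵀ) * (A * G)) 0 := by
    rw [funext hX]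
    exact (((hasDerivAt_id 0).smul_const _).const_add G).congr_deriv (one_smul ℝ _)
  have hP := hasDerivAt_colProj hXd (hX0 ▸ hG)
  rw [hX0, colProjDeriv_oja G A hG hA] at hP
  have hMd := ((hasDerivAt_const 0 Vᵀ).matrix_mul hP).matrix_mul (hasDerivAt_const 0 V)
  simp only [← hMP] at hMd
  refine (hMd.matrix_apply i j).congr_deriv ?_
  simp only [hPP', Matrix.zero_mul, Matrix.mul_zero, zero_add, add_zero, Matrix.mul_add,
    Matrix.mul_sub, Matrix.add_mul, Matrix.sub_mul, Matrix.mul_smul, Matrix.smul_mul,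
    Matrix.mul_assoc]
end

section
/- Lower bound on the Gram operator of an approximate eigenspace: let A be symmetric PSD with A ⪰ VΛ_kVᵀ where V has orthonormal columns and Λ_k ⪰ λ_k I with λ_k > 0. If G̃ is an n×k matrix with cos²θ(V, G̃) ≥ c² and λ_k(G̃ᵀG̃) ≥ μ > 0, then for every w ∈ ℝ^k, wᵀ G̃ᵀ A G̃ w ≥ λ_k c² μ ‖w‖², i.e. λ_min(G̃ᵀAG̃) ≥ λ_k c² μ. -/
/-!
With `g = G̃ w`, the three hypotheses chain together:
`gᵀ A g ≥ λ_k ‖Vᵀ g‖²` by the dominance `A ⪰ V Λ_k Vᵀ`, `‖Vᵀ g‖² ≥ c² ‖g‖²` by the cosine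
bound, and `‖g‖² ≥ μ ‖w‖²` by the Gram bound. When `c² ≤ 0` the claimed bound is nonpositive
while `gᵀ A g ≥ 0`.
-/

open Matrix

namespace Matrix

variable {m n : Type*} [Fintype m] [Fintype n]

lemma dotProduct_self_eq_sum_sq (x : n → ℝ) : x ⬝ᵥ x = ∑ i, x i ^ 2 := by
  simp only [dotProduct, sq]

lemma dotProduct_mulVec_transpose_mul_mul (M : Matrix m m ℝ) (B : Matrix m n ℝ) (w : n → ℝ) :
    w ⬝ᵥ (Bᵀ * M * B) *ᵥ w = (B *ᵥ w) ⬝ᵥ M *ᵥ (B *ᵥ w) := by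
  rw [Matrix.mul_assoc, ← mulVec_mulVec, dotProduct_mulVec, vecMul_transpose, ← mulVec_mulVec]

lemma PosSemidef.dotProduct_mulVec_le_of_sub {M N : Matrix n n ℝ} (h : (M - N).PosSemidef)
    (x : n → ℝ) : x ⬝ᵥ N *ᵥ x ≤ x ⬝ᵥ M *ᵥ x := by
  have := h.dotProduct_mulVec_nonneg x
  rwa [star_trivial, sub_mulVec, dotProduct_sub, sub_nonneg] at this

lemma mul_sum_sq_le_dotProduct_diagonal_mulVec [DecidableEq n] {d : n → ℝ} {l : ℝ}
    (hd : ∀ i, l ≤ d i) (u : n → ℝ) : l * ∑ i, u i ^ 2 ≤ u ⬝ᵥ diagonal d *ᵥ u := by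
  simp only [Finset.mul_sum, dotProduct, mulVec_diagonal]
  exact Finset.sum_le_sum fun i _ => by nlinarith [hd i, sq_nonneg (u i)]

lemma mul_sum_sq_le_sum_sq_mulVec [DecidableEq n] {B : Matrix m n ℝ} {μ : ℝ}
    (h : (Bᵀ * B - μ • (1 : Matrix n n ℝ)).PosSemidef) (w : n → ℝ) :
    μ * ∑ i, w i ^ 2 ≤ ∑ i, (B *ᵥ w) i ^ 2 := by
  have := h.dotProduct_mulVec_le_of_sub w
  rwa [smul_mulVec, one_mulVec, dotProduct_smul, smul_eq_mul, dotProduct_self_eq_sum_sq,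
    ← mulVec_mulVec, dotProduct_mulVec, vecMul_transpose, dotProduct_self_eq_sum_sq] at this

lemma mul_sum_sq_transpose_mulVec_le_dotProduct_mulVec [DecidableEq m] {A : Matrix n n ℝ}
    {V : Matrix n m ℝ} {d : m → ℝ} {l : ℝ} (hdom : (A - V * diagonal d * Vᵀ).PosSemidef)
    (hd : ∀ i, l ≤ d i) (g : n → ℝ) :
    l * ∑ i, (Vᵀ *ᵥ g) i ^ 2 ≤ g ⬝ᵥ A *ᵥ g := by
  calc l * ∑ i, (Vᵀ *ᵥ g) i ^ 2 ≤ (Vᵀ *ᵥ g) ⬝ᵥ diagonal d *ᵥ (Vᵀ *ᵥ g) :=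
        mul_sum_sq_le_dotProduct_diagonal_mulVec hd _
    _ = g ⬝ᵥ (V * diagonal d * Vᵀ) *ᵥ g := by
        rw [← dotProduct_mulVec_transpose_mul_mul, transpose_transpose]
    _ ≤ g ⬝ᵥ A *ᵥ g := hdom.dotProduct_mulVec_le_of_sub g

end Matrix

theorem gram_operator_lower_bound_general {n k : ℕ}
    (A : Matrix (Fin n) (Fin n) ℝ) (V Gt : Matrix (Fin n) (Fin k) ℝ)
    (d : Fin k → ℝ) (lk c2 μ : ℝ)
    (hdom : (A - V * Matrix.diagonal d * Vᵀ).PosSemidef)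
    (hd : ∀ i, lk ≤ d i) (hlk : 0 < lk)
    (hcos : ∀ w : Fin k → ℝ, w ≠ 0 →
      c2 ≤ (∑ i, ((Vᵀ * Gt).mulVec w i) ^ 2) / (∑ i, (Gt.mulVec w i) ^ 2))
    (hμ : 0 < μ)
    (hgram : ((Gtᵀ * Gt) - μ • (1 : Matrix (Fin k) (Fin k) ℝ)).PosSemidef) :
    ∀ w : Fin k → ℝ, lk * c2 * μ * (∑ i, (w i) ^ 2) ≤
      w ⬝ᵥ (Gtᵀ * A * Gt).mulVec w := by
  intro w
  rw [dotProduct_mulVec_transpose_mul_mul]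
  set g := Gt *ᵥ w
  have hgram_w : μ * ∑ i, w i ^ 2 ≤ ∑ i, g i ^ 2 := mul_sum_sq_le_sum_sq_mulVec hgram w
  have hdom_g : lk * ∑ i, (Vᵀ *ᵥ g) i ^ 2 ≤ g ⬝ᵥ A *ᵥ g :=
    mul_sum_sq_transpose_mulVec_le_dotProduct_mulVec hdom hd g
  have hcos_g : c2 * ∑ i, g i ^ 2 ≤ ∑ i, (Vᵀ *ᵥ g) i ^ 2 := by
    rcases eq_or_ne w 0 with rfl | hw
    · simp [g]
    · have := hcos w hw
      rw [← mulVec_mulVec] at this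
      exact mul_le_of_le_div₀ (by positivity) (by positivity) this
  have hVg_nonneg : 0 ≤ ∑ i, (Vᵀ *ᵥ g) i ^ 2 := by positivity
  have hw_nonneg : 0 ≤ ∑ i, w i ^ 2 := by positivity
  refine le_trans ?_ hdom_g
  rcases le_total 0 c2 with hc | hc
  · calc lk * c2 * μ * ∑ i, w i ^ 2 = lk * (c2 * (μ * ∑ i, w i ^ 2)) := by ring
      _ ≤ lk * ∑ i, (Vᵀ *ᵥ g) i ^ 2 :=
        mul_le_mul_of_nonneg_left ((mul_le_mul_of_nonneg_left hgram_w hc).trans hcos_g) hlk.le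
  · nlinarith [mul_nonpos_of_nonneg_of_nonpos (mul_nonneg (mul_nonneg hlk.le hμ.le) hw_nonneg) hc,
      mul_nonneg hlk.le hVg_nonneg]

/-- Lower bound on the Gram operator of an approximate eigenspace: if `A ⪰ VΛ_kVᵀ` with
`V` orthonormal and `Λ_k ⪰ λ_k I`, `λ_k > 0`, `cos²θ(V, G̃) ≥ c²` and
`λ_min(G̃ᵀG̃) ≥ μ > 0`, then `wᵀ G̃ᵀ A G̃ w ≥ λ_k c² μ ‖w‖²` for every `w`. -/
theorem gram_operator_lower_bound {n k : ℕ}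
    (A : Matrix (Fin n) (Fin n) ℝ) (V Gt : Matrix (Fin n) (Fin k) ℝ)
    (d : Fin k → ℝ) (lk c2 μ : ℝ)
    (hA : A.PosSemidef)
    (hV : Vᵀ * V = 1)
    (hdom : (A - V * Matrix.diagonal d * Vᵀ).PosSemidef)
    (hd : ∀ i, lk ≤ d i) (hlk : 0 < lk)
    (hGt : ∀ w : Fin k → ℝ, Gt.mulVec w = 0 → w = 0)
    (hcos : ∀ w : Fin k → ℝ, w ≠ 0 →
      c2 ≤ (∑ i, ((Vᵀ * Gt).mulVec w i) ^ 2) / (∑ i, (Gt.mulVec w i) ^ 2))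
    (hμ : 0 < μ)
    (hgram : ((Gtᵀ * Gt) - μ • (1 : Matrix (Fin k) (Fin k) ℝ)).PosSemidef) :
    ∀ w : Fin k → ℝ, lk * c2 * μ * (∑ i, (w i) ^ 2) ≤
      w ⬝ᵥ (Gtᵀ * A * Gt).mulVec w :=
  gram_operator_lower_bound_general A V Gt d lk c2 μ hdom hd hlk hcos hμ hgram
end
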